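/- Every m-quasi-gradation of V is compatible with some adapted gradation: for every m-quasi-gradation {H̄^i} of V there exists an adapted gradation {H^i} of V with H^i + V_{i+m} = H̄^i for all i. Equivalently, the map Π^m from adapted gradations to m-quasi-gradations given by {H^i} ↦ {H^i + V_{i+m}} is surjective. -/
import Mathlib


/-- An adapted gradation of a filtered vector space `V = V_{-k} ⊇ ⋯ ⊇ V_l`. -/
def IsAdaptedGradation {V : Type*} [AddCommGroup V] [Module ℝ V]
    (k l : ℤ) (Vfil H : ℤ → Submodule ℝ V) : Prop :=
  ∀ i : ℤ, -k ≤ i → i ≤ l →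
    Vfil i = H i ⊔ Vfil (i + 1) ∧ H i ⊓ Vfil (i + 1) = ⊥

/-- An `m`-quasi-gradation of a filtered vector space `V = V_{-k} ⊇ ⋯ ⊇ V_l`. -/
def IsQuasiGradation {V : Type*} [AddCommGroup V] [Module ℝ V]
    (k l m : ℤ) (Vfil H : ℤ → Submodule ℝ V) : Prop :=
  ∀ i : ℤ, -k ≤ i → i ≤ l →
    H i ≤ Vfil i ∧ Vfil i = H i ⊔ Vfil (i + 1) ∧ H i ⊓ Vfil (i + 1) = Vfil (i + m)

/-- Every `m`-quasi-gradation of `V` is compatible with some adapted gradation: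
the map `Π^m : {H^i} ↦ {H^i + V_{i+m}}` from adapted gradations to
`m`-quasi-gradations is surjective. -/
theorem quasiGradation_compatible_exists
    {V : Type*} [AddCommGroup V] [Module ℝ V] [FiniteDimensional ℝ V]
    (k l m : ℤ) (hk : 0 ≤ k) (hl : -1 ≤ l) (hm : 1 ≤ m)
    (Vfil : ℤ → Submodule ℝ V) (hanti : Antitone Vfil)
    (htop : ∀ j : ℤ, j < -k → Vfil j = ⊤) (hbot : ∀ j : ℤ, l < j → Vfil j = ⊥) :
    ∀ Hb : ℤ → Submodule ℝ V, IsQuasiGradation k l m Vfil Hb →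
      ∃ H : ℤ → Submodule ℝ V, IsAdaptedGradation k l Vfil H ∧
        ∀ i : ℤ, -k ≤ i → i ≤ l → H i ⊔ Vfil (i + m) = Hb i := by
  intro Hb hHb
  choose q hq using fun i : ℤ => Submodule.exists_isCompl (Vfil (i + m))
  -- key sup fact: (Hb i ⊓ q i) ⊔ Vfil (i+m) = Hb i for i in range
  have hsup : ∀ i : ℤ, -k ≤ i → i ≤ l → (Hb i ⊓ q i) ⊔ Vfil (i + m) = Hb i := by
    intro i hi1 hi2
    obtain ⟨h1, h2, h3⟩ := hHb i hi1 hi2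
    have hVm : Vfil (i + m) ≤ Hb i := h3 ▸ inf_le_left
    calc (Hb i ⊓ q i) ⊔ Vfil (i + m)
        = Vfil (i + m) ⊔ q i ⊓ Hb i := by rw [sup_comm, inf_comm]
      _ = (Vfil (i + m) ⊔ q i) ⊓ Hb i := (sup_inf_assoc_of_le (q i) hVm).symm
      _ = Hb i := by rw [(hq i).sup_eq_top, top_inf_eq]
  have hVm1 : ∀ i : ℤ, Vfil (i + m) ≤ Vfil (i + 1) := fun i =>
    hanti (by linarith)
  refine ⟨fun i => Hb i ⊓ q i, fun i hi1 hi2 => ?_, fun i hi1 hi2 => hsup i hi1 hi2⟩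
  obtain ⟨h1, h2, h3⟩ := hHb i hi1 hi2
  constructor
  · rw [h2]
    conv_lhs => rw [← hsup i hi1 hi2]
    rw [sup_assoc, sup_eq_right.mpr (hVm1 i)]
  · calc (Hb i ⊓ q i) ⊓ Vfil (i + 1)
        = q i ⊓ (Hb i ⊓ Vfil (i + 1)) := by rw [inf_comm (Hb i) (q i), inf_assoc]
      _ = Vfil (i + m) ⊓ q i := by rw [h3, inf_comm]
      _ = ⊥ := (hq i).inf_eq_bot
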